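/- arXiv:1606.06662 — 2 statements merged into one kernel-verified Lean document; each statement's English description precedes it below -/
import Mathlib

section
/- Enhanced lower bound: Let V be a real Hilbert space with inner product a, V₀ a closed subspace, u the solution of a(u,v)=L(v) for all v ∈ V₀, and u_H an approximation with u - u_H ∈ V₀. Let w ∈ V₀ and let e_G ∈ V_H (a finite-dimensional subspace of V₀) satisfy a(e_G, v) = −a(w, v) for all v ∈ V_H. If additionally a(u - u_H, v) = 0 for all v ∈ V_H (Galerkin orthogonality) and ‖w‖_a² > ‖e_G‖_a², then ‖u - u_H‖_a² ≥ (L(w) − a(u_H,w))² / (‖w‖_a² − ‖e_G‖_a²). -/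
/-!
The residual of `w` equals `⟪u - uH, w + eG⟫`, since Galerkin orthogonality lets `eG ∈ VH` be added
for free. As `eG` is the projection of `-w` onto `VH`, `w + eG ⟂ eG`, so by Pythagoras
`‖w + eG‖² = ‖w‖² - ‖eG‖²`, and Cauchy–Schwarz against `w + eG` gives the bound.
-/

open scoped RealInnerProductSpace

section

variable {V : Type*} [NormedAddCommGroup V] [InnerProductSpace ℝ V]

theorem sq_inner_div_norm_sq_le (x y : V) : ⟪x, y⟫ ^ 2 / ‖y‖ ^ 2 ≤ ‖x‖ ^ 2 := by
  refine div_le_of_le_mul₀ (by positivity) (by positivity) ?_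
  calc ⟪x, y⟫ ^ 2 = |⟪x, y⟫| ^ 2 := (sq_abs _).symm
    _ ≤ (‖x‖ * ‖y‖) ^ 2 := pow_le_pow_left₀ (abs_nonneg _) (abs_real_inner_le_norm x y) 2
    _ = ‖x‖ ^ 2 * ‖y‖ ^ 2 := mul_pow _ _ _

theorem norm_sq_sub_norm_sq_eq_of_inner_add_eq_zero {x y : V} (h : ⟪x + y, y⟫ = 0) :
    ‖x‖ ^ 2 - ‖y‖ ^ 2 = ‖x + y‖ ^ 2 := by
  rw [inner_add_left, real_inner_self_eq_norm_sq] at h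
  linarith [norm_add_sq_real x y]

end

theorem stmt5_general {V : Type*} [NormedAddCommGroup V] [InnerProductSpace ℝ V]
    (V₀ VH : Submodule ℝ V)
    (L : V →L[ℝ] ℝ)
    (u : V) (hu : ∀ v ∈ V₀, ⟪u, v⟫ = L v)
    (uH : V)
    (w : V) (hw : w ∈ V₀)
    (eG : V) (heG : eG ∈ VH)
    (heGdef : ∀ v ∈ VH, ⟪eG, v⟫ = -⟪w, v⟫)
    (hGal : ∀ v ∈ VH, ⟪u - uH, v⟫ = 0) :
    ‖u - uH‖ ^ 2 ≥ (L w - ⟪uH, w⟫) ^ 2 / (‖w‖ ^ 2 - ‖eG‖ ^ 2) := by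
  have hres : L w - ⟪uH, w⟫ = ⟪u - uH, w + eG⟫ := by
    rw [inner_add_right, hGal eG heG, add_zero, inner_sub_left, hu w hw]
  have horth : ⟪w + eG, eG⟫ = 0 := by
    rw [inner_add_left, heGdef eG heG, add_neg_cancel]
  rw [ge_iff_le, hres, norm_sq_sub_norm_sq_eq_of_inner_add_eq_zero horth]
  exact sq_inner_div_norm_sq_le _ _

/-- Enhanced lower bound of the error (eq. (13) of the paper). -/
theorem stmt5 {V : Type*} [NormedAddCommGroup V] [InnerProductSpace ℝ V] [CompleteSpace V]
    (V₀ VH : Submodule ℝ V) (hVH : VH ≤ V₀) [FiniteDimensional ℝ VH]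
    (L : V →L[ℝ] ℝ)
    (u : V) (hu : ∀ v ∈ V₀, ⟪u, v⟫ = L v)
    (uH : V) (huH : u - uH ∈ V₀)
    (w : V) (hw : w ∈ V₀)
    (eG : V) (heG : eG ∈ VH)
    (heGdef : ∀ v ∈ VH, ⟪eG, v⟫ = -⟪w, v⟫)
    (hGal : ∀ v ∈ VH, ⟪u - uH, v⟫ = 0)
    (hdenom : ‖eG‖ ^ 2 < ‖w‖ ^ 2) :
    ‖u - uH‖ ^ 2 ≥ (L w - ⟪uH, w⟫) ^ 2 / (‖w‖ ^ 2 - ‖eG‖ ^ 2) :=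
  stmt5_general V₀ VH L u hu uH w hw eG heG heGdef hGal
end

section
/- Lower bound for the combined error (β⁺_inf): In the setting where a = Σ_s a_s over subdomains (each a_s positive semidefinite), let e, ẽ ∈ V₀ satisfy the residual equations a(e, v) = R(v) and a(ẽ, v) = R̃(v) for all v ∈ V₀, and let κ > 0. Then for any z⁺ ∈ V₀ with Σ_s a_s(z⁺, z⁺) > 0, ‖κe + (1/κ)ẽ‖_a² ≥ (κ R(z⁺) + (1/κ) R̃(z⁺))² / (Σ_s a_s(z⁺, z⁺)). -/
open scoped BigOperators

namespace LinearMap.BilinForm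

variable {R M : Type*} [Field R] [LinearOrder R] [IsStrictOrderedRing R]
  [AddCommGroup M] [Module R M] (B : LinearMap.BilinForm R M)

/-- When `B y y = 0` the left side is `0` by the `x / 0 = 0` convention. -/
lemma sq_div_le_of_symm (hs : ∀ x, 0 ≤ B x x) (hB : LinearMap.IsSymm B) (x y : M) :
    (B x y) ^ 2 / B y y ≤ B x x := by
  rcases (hs y).eq_or_lt with hy | hy
  · simpa [← hy] using hs x
  · rw [div_le_iff₀ hy]
    exact B.apply_sq_le_of_symm hs hB x y

/-- The residual equations evaluate `B (c • e + c' • e') z` without knowing `e, e'`, so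
Cauchy–Schwarz against any test vector `z ∈ V₀` bounds the energy of the combined error below. -/
lemma sq_residual_div_le_of_symm (hs : ∀ x, 0 ≤ B x x) (hB : LinearMap.IsSymm B)
    {V₀ : Submodule R M} {Res Res' : M →ₗ[R] R} {e e' : M} (he : ∀ v ∈ V₀, B e v = Res v)
    (he' : ∀ v ∈ V₀, B e' v = Res' v) (c c' : R) {z : M} (hz : z ∈ V₀) :
    (c * Res z + c' * Res' z) ^ 2 / B z z ≤ B (c • e + c' • e') (c • e + c' • e') := by
  have hres : B (c • e + c' • e') z = c * Res z + c' * Res' z := by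
    simp only [map_add, map_smul, LinearMap.add_apply, LinearMap.smul_apply, smul_eq_mul,
      he z hz, he' z hz]
  rw [← hres]
  exact B.sq_div_le_of_symm hs hB _ z

end LinearMap.BilinForm

theorem stmt16_general {V : Type*} [AddCommGroup V] [Module ℝ V] (N : ℕ)
    (a : Fin N → (V →ₗ[ℝ] V →ₗ[ℝ] ℝ))
    (hsymm : ∀ s x y, a s x y = a s y x)
    (hpsd : ∀ s v, 0 ≤ a s v v)
    (V₀ : Submodule ℝ V)
    (R Rt : V →ₗ[ℝ] ℝ)
    (e et : V)
    (he : ∀ v ∈ V₀, ∑ s, a s e v = R v)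
    (het : ∀ v ∈ V₀, ∑ s, a s et v = Rt v)
    (κ : ℝ)
    (z : V) (hz : z ∈ V₀) :
    ∑ s, a s (κ • e + κ⁻¹ • et) (κ • e + κ⁻¹ • et) ≥
      (κ * R z + κ⁻¹ * Rt z) ^ 2 / (∑ s, a s z z) := by
  set B : LinearMap.BilinForm ℝ V := ∑ s, a s
  have hB : ∀ x y, B x y = ∑ s, a s x y := fun x y => by
    simp only [B, LinearMap.sum_apply]
  simp only [← hB] at he het ⊢
  refine B.sq_residual_div_le_of_symm (fun v => ?_) ⟨fun x y => ?_⟩ he het κ κ⁻¹ hz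
  · rw [hB]
    exact Finset.sum_nonneg fun s _ => hpsd s v
  · rw [RingHom.id_apply, hB, hB]
    exact Finset.sum_congr rfl fun s _ => hsymm s x y

/-- Lower bound β⁺_inf of Corollary 1 for the combined error. -/
theorem stmt16 {V : Type*} [AddCommGroup V] [Module ℝ V] (N : ℕ)
    (a : Fin N → (V →ₗ[ℝ] V →ₗ[ℝ] ℝ))
    (hsymm : ∀ s x y, a s x y = a s y x)
    (hpsd : ∀ s v, 0 ≤ a s v v)
    (V₀ : Submodule ℝ V)
    (R Rt : V →ₗ[ℝ] ℝ)
    (e et : V)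
    (he : ∀ v ∈ V₀, ∑ s, a s e v = R v)
    (het : ∀ v ∈ V₀, ∑ s, a s et v = Rt v)
    (κ : ℝ) (hκ : 0 < κ)
    (z : V) (hz : z ∈ V₀) (hzpos : 0 < ∑ s, a s z z) :
    ∑ s, a s (κ • e + κ⁻¹ • et) (κ • e + κ⁻¹ • et) ≥
      (κ * R z + κ⁻¹ * Rt z) ^ 2 / (∑ s, a s z z) :=
  stmt16_general N a hsymm hpsd V₀ R Rt e et he het κ z hz
end
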